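/- For every real number α, the product C_∞ · exp(α•B) equals the 3×4 matrix with rows (cos α, −sin α, 0, 0), (sin α, cos α, 0, 0), (0, 0, sin α, cos α). -/

import Mathlib

open Matrix

/-- The null-polarity matrix used in Cremona's method. -/
def Bmat : Matrix (Fin 4) (Fin 4) ℝ :=
  !![0, -1, 0, 0;
     1,  0, 0, 0;
     0,  0, 0, -1;
     0,  0, 1, 0]

/-- Parallel projection along the z-axis, in homogeneous coordinates. -/
def Cinf : Matrix (Fin 3) (Fin 4) ℝ :=
  !![1, 0, 0, 0;
     0, 1, 0, 0;
     0, 0, 0, 1]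

/-!
Since `B² = -1`, the real algebra map `ℂ → Matrix n n ℝ` sending `i` to `B` is continuous and so
commutes with `exp`; hence `exp (α • B) = cos α • 1 + sin α • B`, as `exp (α i) = cos α + i sin α`.
Multiplying by `C∞` is then a finite computation.
-/

theorem Matrix.exp_smul_of_mul_self_eq_neg_one {n : Type*} [Fintype n] [DecidableEq n]
    {J : Matrix n n ℝ} (hJ : J * J = -1) (t : ℝ) :
    NormedSpace.exp (t • J) = Real.cos t • 1 + Real.sin t • J := by
  -- Matrices carry no global norm; the `L∞` operator norm induces the usual topology,
  -- so it does not change `exp` (whence the `rfl` below).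
  let : NormedRing (Matrix n n ℝ) := Matrix.linftyOpNormedRing
  let : NormedAlgebra ℝ (Matrix n n ℝ) := Matrix.linftyOpNormedAlgebra
  let φ := Complex.liftAux J hJ
  have hφ : Continuous φ := φ.toLinearMap.continuous_of_finiteDimensional
  calc NormedSpace.exp (t • J) = φ (NormedSpace.exp (t • Complex.I)) := by
        rw [NormedSpace.map_exp φ hφ, map_smul, Complex.liftAux_apply_I]
        rfl
    _ = φ (Real.cos t • 1 + Real.sin t • Complex.I) := by
        rw [Complex.real_smul, ← Complex.exp_eq_exp_ℂ, Complex.exp_mul_I]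
        congr 1
        apply Complex.ext <;> simp
    _ = Real.cos t • 1 + Real.sin t • J := by
        rw [map_add, map_smul, map_smul, map_one, Complex.liftAux_apply_I]

lemma Bmat_mul_self : Bmat * Bmat = -1 := by
  ext i j
  fin_cases i <;> fin_cases j <;> simp [Bmat, mul_apply, Fin.sum_univ_succ, one_apply]

lemma Cinf_mul_Bmat : Cinf * Bmat = !![0, -1, 0, 0; 1, 0, 0, 0; 0, 0, 1, 0] := by
  ext i j
  fin_cases i <;> fin_cases j <;> simp [Cinf, Bmat, mul_apply, Fin.sum_univ_succ]

/-- For every real `α`, `C∞ * exp (α • B)` is the explicit `3 × 4` matrix below. -/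
theorem Cinf_mul_exp_smul_Bmat (α : ℝ) :
    Cinf * NormedSpace.exp (α • Bmat) =
      !![Real.cos α, -Real.sin α, 0, 0;
         Real.sin α, Real.cos α, 0, 0;
         0, 0, Real.sin α, Real.cos α] := by
  rw [exp_smul_of_mul_self_eq_neg_one Bmat_mul_self, Matrix.mul_add, Matrix.mul_smul,
    Matrix.mul_smul, Matrix.mul_one, Cinf_mul_Bmat]
  ext i j
  fin_cases i <;> fin_cases j <;> simp [Cinf]
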